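/- Let p ≥ 1 and let α_1, …, α_p ∈ ℂ[[y]]. Fix k ∈ {1,…,p} and a positive integer h; set S = {i : O(α_i, α_k) ≥ h}, λ = Σ_{e<h} coeff_e(α_k) y^e, q = Σ_{i=1}^p min(h, O(α_k, α_i)), F_B(z) = ∏_{i∈S} (z − coeff_h(α_i)), and C = ∏_{i∉S} coeff_{d_i}(α_k − α_i), where d_i = O(α_k, α_i) < h for i ∉ S. Then C ≠ 0 and for every z ∈ ℂ and every γ ∈ ℂ[[y]] satisfying coeff_e(γ) = coeff_e(α_k) for all e < h and coeff_h(γ) = z (the higher coefficients of γ being arbitrary), the power series ∏_{i=1}^p (γ − α_i) has order ≥ q and its coefficient at y^q equals C · F_B(z). -/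

import Mathlib

/-!
Write `γ - α i = (γ - α k) + (α k - α i)`. Since `γ` agrees with `α k` below degree `h`, the
factor `γ - α i` has order at least `min h (O(α k, α i))`, and its coefficient there is
`coeff_h γ - coeff_h (α i) = z - coeff_h (α i)` when `O(α k, α i) ≥ h`, and the leading
coefficient of `α k - α i` otherwise. The coefficient of a product at the sum of lower bounds
for the orders of its factors is the product of the factors' coefficients at those bounds.
-/

open PowerSeries

namespace PowerSeries

variable {R : Type*}

theorem order_sub_comm [Ring R] (φ ψ : R⟦X⟧) : (φ - ψ).order = (ψ - φ).order := by
  rw [← neg_sub, order_neg]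

theorem coeff_add_mul_of_le_order [Semiring R] {φ ψ : R⟦X⟧} {m n : ℕ}
    (hφ : (m : ℕ∞) ≤ φ.order) (hψ : (n : ℕ∞) ≤ ψ.order) :
    coeff (m + n) (φ * ψ) = coeff m φ * coeff n ψ := by
  rw [coeff_mul, Finset.sum_eq_single (m, n)]
  · rintro ⟨a, b⟩ hab hne
    rw [Finset.HasAntidiagonal.mem_antidiagonal] at hab
    rcases lt_or_ge a m with ha | ha
    · rw [coeff_of_lt_order a (lt_of_lt_of_le (by exact_mod_cast ha) hφ), zero_mul]
    · have hb : b < n := by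
        by_contra! hb
        exact hne (Prod.ext (by omega) (by omega))
      rw [coeff_of_lt_order b (lt_of_lt_of_le (by exact_mod_cast hb) hψ), mul_zero]
  · simp

section

variable [CommSemiring R] {ι : Type*} (s : Finset ι) {φ : ι → R⟦X⟧} {n : ι → ℕ}

theorem sum_le_order_prod (hn : ∀ i ∈ s, (n i : ℕ∞) ≤ (φ i).order) :
    ((∑ i ∈ s, n i : ℕ) : ℕ∞) ≤ (∏ i ∈ s, φ i).order := by
  push_cast
  exact (Finset.sum_le_sum hn).trans (le_order_prod φ s)

theorem coeff_sum_prod_of_le_order (hn : ∀ i ∈ s, (n i : ℕ∞) ≤ (φ i).order) :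
    coeff (∑ i ∈ s, n i) (∏ i ∈ s, φ i) = ∏ i ∈ s, coeff (n i) (φ i) := by
  induction s using Finset.cons_induction with
  | empty => simp
  | cons a s ha ih =>
    have hs : ∀ i ∈ s, (n i : ℕ∞) ≤ (φ i).order := fun i hi => hn i (Finset.mem_cons_of_mem hi)
    rw [Finset.sum_cons, Finset.prod_cons, Finset.prod_cons,
      coeff_add_mul_of_le_order (hn a (Finset.mem_cons_self a s)) (sum_le_order_prod s hs), ih hs]

end

section

variable [Ring R] {γ φ : R⟦X⟧} {h : ℕ}

theorem toNat_min_le_order_sub_of_coeff_eq (hγ : ∀ e < h, coeff e γ = coeff e φ)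
    (ψ : R⟦X⟧) : (((min (h : ℕ∞) (φ - ψ).order).toNat : ℕ) : ℕ∞) ≤ (γ - ψ).order := by
  have hγφ : (h : ℕ∞) ≤ (γ - φ).order :=
    nat_le_order _ _ fun e he => by rw [map_sub, hγ e he, sub_self]
  calc _ ≤ min (h : ℕ∞) (φ - ψ).order := ENat.natCast_toNat_le_self _
    _ ≤ min (γ - φ).order (φ - ψ).order := min_le_min_right _ hγφ
    _ ≤ (γ - φ + (φ - ψ)).order := min_order_le_order_add _ _
    _ = (γ - ψ).order := by rw [sub_add_sub_cancel]

theorem coeff_sub_of_coeff_eq (hγ : ∀ e < h, coeff e γ = coeff e φ)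
    (ψ : R⟦X⟧) {e : ℕ} (he : e < h) : coeff e (γ - ψ) = coeff e (φ - ψ) := by
  rw [map_sub, map_sub, hγ e he]

end

end PowerSeries

theorem stmt_3_general (p : ℕ) (α : Fin p → PowerSeries ℂ)
    (k : Fin p) (h : ℕ)
    (S : Finset (Fin p)) (hS : S = Finset.univ.filter fun i => (h : ℕ∞) ≤ (α i - α k).order)
    (q : ℕ) (hq : q = ∑ i, (min (h : ℕ∞) ((α k - α i).order)).toNat)
    (F : Polynomial ℂ)
    (hF : F = ∏ i ∈ S, (Polynomial.X - Polynomial.C (PowerSeries.coeff h (α i))))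
    (C : ℂ)
    (hC : C = ∏ i ∈ Sᶜ, PowerSeries.coeff ((α k - α i).order.toNat) (α k - α i)) :
    C ≠ 0 ∧
    ∀ (z : ℂ) (γ : PowerSeries ℂ),
      (∀ e < h, PowerSeries.coeff e γ = PowerSeries.coeff e (α k)) →
      PowerSeries.coeff h γ = z →
      (q : ℕ∞) ≤ (∏ i, (γ - α i)).order ∧
      PowerSeries.coeff q (∏ i, (γ - α i)) = C * F.eval z := by
  have hmem : ∀ i, i ∈ S ↔ (h : ℕ∞) ≤ (α k - α i).order := by
    simp [hS, order_sub_comm (α k)]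
  have hlt : ∀ i ∈ Sᶜ, (α k - α i).order < h := fun i hi =>
    not_le.mp ((hmem i).not.mp (Finset.mem_compl.mp hi))
  refine ⟨?_, fun z γ hγ hγh => ?_⟩
  · rw [hC, Finset.prod_ne_zero_iff]
    exact fun i hi => coeff_order fun h0 => by simpa [h0] using hlt i hi
  have hle := toNat_min_le_order_sub_of_coeff_eq hγ
  subst hq
  refine ⟨sum_le_order_prod _ fun i _ => hle (α i), ?_⟩
  rw [coeff_sum_prod_of_le_order _ fun i _ => hle (α i), ← Finset.prod_mul_prod_compl S, hC, hF,
    Polynomial.eval_prod, mul_comm]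
  congr 1
  · refine Finset.prod_congr rfl fun i hi => ?_
    have hd : (α k - α i).order.toNat < h := by
      have hi' := hlt i hi
      lift (α k - α i).order to ℕ using ne_top_of_lt hi' with d
      simpa using hi'
    rw [min_eq_right (hlt i hi).le, coeff_sub_of_coeff_eq hγ _ hd]
  · refine Finset.prod_congr rfl fun i hi => ?_
    rw [min_eq_left ((hmem i).mp hi), ENat.toNat_natCast, map_sub, hγh]
    simp

/-- Lemma 2 of the paper: for `f(x,y) = ∏ (x - α_i(y))` and any
`γ = λ_B + z y^h + (higher order terms)`,
`f(γ(y), y) = C · F_B(z) · y^(q(B)) + (higher order terms)`. -/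
theorem stmt_3 (p : ℕ) (hp : 1 ≤ p) (α : Fin p → PowerSeries ℂ)
    (k : Fin p) (h : ℕ) (hh : 0 < h)
    (S : Finset (Fin p)) (hS : S = Finset.univ.filter fun i => (h : ℕ∞) ≤ (α i - α k).order)
    (q : ℕ) (hq : q = ∑ i, (min (h : ℕ∞) ((α k - α i).order)).toNat)
    (F : Polynomial ℂ)
    (hF : F = ∏ i ∈ S, (Polynomial.X - Polynomial.C (PowerSeries.coeff h (α i))))
    (C : ℂ)
    (hC : C = ∏ i ∈ Sᶜ, PowerSeries.coeff ((α k - α i).order.toNat) (α k - α i)) :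
    C ≠ 0 ∧
    ∀ (z : ℂ) (γ : PowerSeries ℂ),
      (∀ e < h, PowerSeries.coeff e γ = PowerSeries.coeff e (α k)) →
      PowerSeries.coeff h γ = z →
      (q : ℕ∞) ≤ (∏ i, (γ - α i)).order ∧
      PowerSeries.coeff q (∏ i, (γ - α i)) = C * F.eval z :=
  stmt_3_general p α k h S hS q hq F hF C hC
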